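/- arXiv:2605.13198 — 2 statements merged into one kernel-verified Lean document; each statement's English description precedes it below -/
import Mathlib

section
/- Let δ, n be positive integers with n even and n ≥ 8δ + 4. Define g(x) = (δ+1)x² + (-δ² + δ - n/2 + 1)x - 2δ³ + δ²n - δ² - n³/8. Then g(x) < 0 for all real x with n/2 < x ≤ n - 1. -/
/-- for positive integers `δ, n` with `n` even and `n ≥ 8δ + 4`, the quadratic
`g(x) = (δ+1)x² + (-δ² + δ - n/2 + 1)x - 2δ³ + δ²n - δ² - n³/8` is negative for all real `x`
with `n/2 < x ≤ n - 1`. -/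
theorem stmt5 (δ n : ℕ) (hδ : 0 < δ) (hn : 0 < n) (heven : Even n)
    (h1 : 8 * δ + 4 ≤ n) :
    ∀ x : ℝ, (n : ℝ) / 2 < x → x ≤ (n : ℝ) - 1 →
      ((δ : ℝ) + 1) * x ^ 2 + (-(δ : ℝ) ^ 2 + δ - n / 2 + 1) * x
        - 2 * (δ : ℝ) ^ 3 + (δ : ℝ) ^ 2 * n - (δ : ℝ) ^ 2 - (n : ℝ) ^ 3 / 8 < 0 := by
  intro x hx1 hx2
  have hd : (1 : ℝ) ≤ (δ : ℝ) := by exact_mod_cast hδ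
  have hN : (8 * (δ : ℝ) + 4 : ℝ) ≤ (n : ℝ) := by exact_mod_cast h1
  nlinarith [mul_nonneg (sub_nonneg.2 hx1.le) (sub_nonneg.2 hx2),
    mul_nonneg (mul_nonneg (sub_nonneg.2 hd) (sub_nonneg.2 hx1.le)) (sub_nonneg.2 hx2),
    mul_nonneg (mul_nonneg (sub_nonneg.2 hd) (sub_nonneg.2 hd)) (sub_nonneg.2 hx2),
    sq_nonneg ((n:ℝ) - 8*δ - 4), mul_nonneg (sub_nonneg.2 hd) (sub_nonneg.2 hN),
    mul_nonneg (sub_nonneg.2 hd) (sub_nonneg.2 hx2),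
    mul_pos (sub_pos.2 hx1) (sub_pos.2 hx1)]
end

section
/- Let n = s + n₁ + n₂ + ⋯ + n_t with n₁ ≥ n₂ ≥ ⋯ ≥ n_t ≥ p ≥ 1 and n₁ < n - s - p(t-1). Then the number of edges of K_s ∨ (K_{n₁} + ⋯ + K_{n_t}) is strictly less than the number of edges of K_s ∨ (K_{n-s-p(t-1)} + (t-1)K_p). -/
lemma two_mul_choose_two (n : ℕ) : 2 * n.choose 2 = n * (n - 1) := by
  induction n with
  | zero => rfl
  | succ m ih =>
    rw [Nat.choose_succ_succ, Nat.choose_one_right, Nat.mul_add, ih]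
    cases m with
    | zero => rfl
    | succ k =>
      simp only [Nat.succ_sub_one]
      ring

lemma choose_le_aux (p d : ℕ) (hp : 1 ≤ p) :
    (p + d).choose 2 ≤ p.choose 2 + d * (p + d - 1) := by
  obtain ⟨q, rfl⟩ := Nat.exists_eq_add_of_le hp
  have h1 := two_mul_choose_two (1 + q + d)
  have h2 := two_mul_choose_two (1 + q)
  have e1 : 1 + q + d - 1 = q + d := by omega
  have e2 : 1 + q - 1 = q := by omega
  rw [e1] at h1; rw [e2] at h2
  have hd : d ≤ d * d := by nlinarith [Nat.zero_le d]
  nlinarith [hd]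

lemma choose_ge_aux (a d : ℕ) (ha : 1 ≤ a) :
    a.choose 2 + d * a ≤ (a + d).choose 2 := by
  have h1 := two_mul_choose_two (a + d)
  have h2 := two_mul_choose_two a
  obtain ⟨b, rfl⟩ := Nat.exists_eq_add_of_le ha
  have e1 : 1 + b + d - 1 = b + d := by omega
  have e2 : 1 + b - 1 = b := by omega
  rw [e1] at h1; rw [e2] at h2
  have hd : d ≤ d * d := by nlinarith [Nat.zero_le d]
  nlinarith [hd]

/-- Lemma of Zheng et al.: if `n = s + n₁ + ⋯ + n_t` with
`n₁ ≥ n₂ ≥ ⋯ ≥ n_t ≥ p ≥ 1` and `n₁ < n - s - p(t-1)`, then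
`e(K_s ∨ (K_{n₁} + ⋯ + K_{n_t})) < e(K_s ∨ (K_{n-s-p(t-1)} + (t-1)K_p))`;
equivalently, `∑ᵢ C(nᵢ,2) < C(n-s-p(t-1),2) + (t-1)·C(p,2)`. -/
theorem stmt7 (t s p n : ℕ) (ht : 0 < t) (a : Fin t → ℕ)
    (hn : n = s + ∑ i, a i)
    (hmono : ∀ i j : Fin t, i ≤ j → a j ≤ a i)
    (hp : ∀ i, p ≤ a i) (hp1 : 1 ≤ p)
    (h1 : a ⟨0, ht⟩ < n - s - p * (t - 1)) :
    (s.choose 2 + s * (n - s) + ∑ i, (a i).choose 2) <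
      (s.choose 2 + s * (n - s) + (n - s - p * (t - 1)).choose 2 + (t - 1) * p.choose 2) := by
  obtain ⟨t', rfl⟩ : ∃ t', t = t' + 1 := ⟨t - 1, by omega⟩
  set a0 := a 0 with ha0
  have hsum : ∑ i, a i = a 0 + ∑ i : Fin t', a i.succ := Fin.sum_univ_succ a
  set S := ∑ i : Fin t', a i.succ with hS
  -- D = S - p * t'
  have hpt : p * t' ≤ S := by
    calc p * t' = ∑ _i : Fin t', p := by simp [Finset.sum_const, Nat.mul_comm]
    _ ≤ S := Finset.sum_le_sum fun i _ => hp i.succ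
  set D := S - p * t' with hD
  have hSD : S = p * t' + D := by omega
  have hns : n - s = a0 + S := by omega
  have hN : n - s - p * (t' + 1 - 1) = a0 + D := by
    simp only [Nat.add_sub_cancel]; omega
  have hDpos : 0 < D := by
    rw [show (⟨0, ht⟩ : Fin (t' + 1)) = 0 from rfl, hN] at h1; omega
  have ha01 : 1 ≤ a0 := le_trans hp1 (hp 0)
  -- sum of (a i.succ - p) equals D
  have hsubsum : ∑ i : Fin t', (a i.succ - p) = D := by
    have h : ∑ i : Fin t', ((a i.succ - p) + p) = S :=
      Finset.sum_congr rfl fun i _ => Nat.sub_add_cancel (hp i.succ)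
    simp only [Finset.sum_add_distrib, Finset.sum_const, Finset.card_univ, Fintype.card_fin, smul_eq_mul] at h
    rw [Nat.mul_comm t' p] at h
    omega
  -- per-term bound
  have hterm : ∀ i : Fin t', (a i.succ).choose 2 ≤ p.choose 2 + (a i.succ - p) * (a0 - 1) := by
    intro i
    have hpi := hp i.succ
    obtain ⟨d, hd⟩ := Nat.exists_eq_add_of_le hpi
    have hle : a i.succ ≤ a0 := hmono 0 i.succ (Fin.zero_le _)
    calc (a i.succ).choose 2 = (p + d).choose 2 := by rw [hd]
      _ ≤ p.choose 2 + d * (p + d - 1) := choose_le_aux p d hp1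
      _ ≤ p.choose 2 + d * (a0 - 1) := by
          gcongr
          omega
      _ = p.choose 2 + (a i.succ - p) * (a0 - 1) := by rw [hd]; simp
  have hsum2 : ∑ i : Fin t', (a i.succ).choose 2 ≤ t' * p.choose 2 + D * (a0 - 1) := by
    calc ∑ i : Fin t', (a i.succ).choose 2
        ≤ ∑ i : Fin t', (p.choose 2 + (a i.succ - p) * (a0 - 1)) :=
          Finset.sum_le_sum fun i _ => hterm i
      _ = t' * p.choose 2 + (∑ i : Fin t', (a i.succ - p)) * (a0 - 1) := by
          rw [Finset.sum_add_distrib, Finset.sum_const, ← Finset.sum_mul]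
          simp [Nat.mul_comm]
      _ = t' * p.choose 2 + D * (a0 - 1) := by rw [hsubsum]
  have hrhs : a0.choose 2 + D * a0 ≤ (a0 + D).choose 2 := choose_ge_aux a0 D ha01
  have hkey : a0.choose 2 + ∑ i : Fin t', (a i.succ).choose 2 < (a0 + D).choose 2 + t' * p.choose 2 := by
    have hstrict : D * (a0 - 1) < D * a0 := by
      have : D * (a0 - 1) + D = D * a0 := by
        have : a0 - 1 + 1 = a0 := by omega
        calc D * (a0 - 1) + D = D * (a0 - 1 + 1) := by ring
          _ = D * a0 := by rw [this]
      omega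
    calc a0.choose 2 + ∑ i : Fin t', (a i.succ).choose 2
        ≤ a0.choose 2 + (t' * p.choose 2 + D * (a0 - 1)) := by omega
      _ < a0.choose 2 + (t' * p.choose 2 + D * a0) := by omega
      _ ≤ (a0 + D).choose 2 + t' * p.choose 2 := by omega
  have hsumchoose : ∑ i, (a i).choose 2 = a0.choose 2 + ∑ i : Fin t', (a i.succ).choose 2 :=
    Fin.sum_univ_succ _
  rw [hsumchoose, hN]
  simp only [Nat.add_sub_cancel]
  omega
end
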